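/- arXiv:0809.1476 — 5 statements merged into one kernel-verified Lean document; each statement's English description precedes it below -/
import Mathlib

section
/- Let $n_0/n_1$ be a reduced positive rational number (with $n_0, n_1$ positive integers), let $r$ be a real number, and let $N$ be an integer with $N \ge \max\{n_1, 2\}$. Suppose $|r - n_0/n_1| < 1/(2N^2)$. Then $n_0/n_1$ is equal to one of the convergents of the (simple) continued fraction expansion $[b_0; b_1, b_2, \ldots]$ of $r$; that is, there exists an index $L$ such that $n_0/n_1 = [b_0; b_1, \ldots, b_L]$. Moreover, for every index $t > L$ for which the convergent $[b_0; b_1, \ldots, b_t]$ is defined, the denominator of the rational number $[b_0; b_1, \ldots, b_t]$ (in lowest terms) is greater than $N$. -/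
open GenContFract
lemma exists_int_contsAux (v : ℝ) (n : ℕ) :
    ∃ a b : ℤ, ((GenContFract.of v).contsAux n).a = (a:ℝ) ∧
      ((GenContFract.of v).contsAux n).b = (b:ℝ) := by
  induction n using Nat.strong_induction_on with
  | _ n ih =>
    match n with
    | 0 => exact ⟨1, 0, by simp [zeroth_contAux_eq_one_zero], by simp [zeroth_contAux_eq_one_zero]⟩
    | 1 => exact ⟨⌊v⌋, 1, by simp [first_contAux_eq_h_one, of_h_eq_floor],
        by simp [first_contAux_eq_h_one]⟩
    | (n+2) =>
      obtain ⟨pa, pb, hpa, hpb⟩ := ih n (by omega)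
      obtain ⟨a, b, ha, hb⟩ := ih (n+1) (by omega)
      cases hs : (GenContFract.of v).s.get? n with
      | none =>
        have h2 : (GenContFract.of v).contsAux (n+2) = (GenContFract.of v).contsAux (n+1) :=
          contsAux_stable_step_of_terminated hs
        exact ⟨a, b, by rw [h2, ha], by rw [h2, hb]⟩
      | some gp =>
        have hga : gp.a = 1 := of_partNum_eq_one (partNum_eq_s_a hs)
        obtain ⟨z, hz⟩ := exists_int_eq_of_partDen (partDen_eq_s_b hs)
        have h2 := contsAux_recurrence hs rfl rfl
        refine ⟨z*a + pa, z*b + pb, ?_, ?_⟩ <;> rw [h2] <;>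
          simp [hga, hz, ha, hb, hpa, hpb] <;> push_cast <;> ring


noncomputable def bnd (q : ℕ) : ℝ :=
  if q = 1 then 1 else ((q:ℝ)-1)/((q:ℝ)*(2*(q:ℝ)*((q:ℝ)-1)-1))

lemma bnd_pos {q : ℕ} (hq : 0 < q) : 0 < bnd q := by
  unfold bnd
  rcases eq_or_ne q 1 with h | h
  · simp [h]
  · have h2 : (2:ℝ) ≤ (q:ℝ) := by
      have : 2 ≤ q := by omega
      exact_mod_cast this
    rw [if_neg h]
    have h4 : (3:ℝ) ≤ 2*(q:ℝ)*((q:ℝ)-1)-1 := by nlinarith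
    have h3 : (0:ℝ) < (q:ℝ)*(2*(q:ℝ)*((q:ℝ)-1)-1) := by
      apply mul_pos <;> linarith
    apply div_pos _ h3; linarith


lemma key_low (Q P E : ℝ) (hQ2 : 2 ≤ Q) (hP1 : 1 ≤ P) (hPQ : P ≤ Q - 1)
    (hupE : E*(Q*(2*Q*(Q-1)-1)) < Q-1) (hD : 0 < P + Q*E) :
    -(1/(2*P^2)) < -(Q^2*E)/(P*(P+Q*E)) := by
  have hPpos : (0:ℝ) < P := by linarith
  have hc3 : (3:ℝ) ≤ 2*Q*(Q-1)-1 := by nlinarith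
  have hcpos : (0:ℝ) < Q*(2*Q*(Q-1)-1) := mul_pos (by linarith) (by linarith)
  rcases le_or_gt E 0 with hE0 | hE0
  · have h9 : (0:ℝ) ≤ -(Q^2*E) := by nlinarith [sq_nonneg Q]
    have h10 : (0:ℝ) ≤ -(Q^2*E)/(P*(P + Q*E)) :=
      div_nonneg h9 (le_of_lt (mul_pos hPpos hD))
    have hp2 : (0:ℝ) < 1/(2*P^2) := by positivity
    linarith
  · rw [neg_lt, neg_div, neg_neg]
    rw [div_lt_div_iff₀ (mul_pos hPpos hD) (by positivity : (0:ℝ) < 2*P^2)]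
    have k0 : (0:ℝ) < 2*P*Q - 1 := by nlinarith
    have k1 : Q*(2*Q*(Q-1)-1)*E*(2*P*Q-1) < (Q-1)*(2*P*Q-1) := by
      have := mul_lt_mul_of_pos_right hupE k0
      nlinarith [this]
    have k2 : (Q-1)*(2*P*Q-1) ≤ P*(Q*(2*Q*(Q-1)-1)) := by nlinarith
    have k3 : Q*E*(2*P*Q-1) < P := by nlinarith [k1, k2, hcpos]
    nlinarith [mul_lt_mul_of_pos_left k3 hPpos]

lemma key_up (Q P E : ℝ) (pn : ℕ) (hpn : ((pn:ℕ):ℝ) = P) (hQ2 : 2 ≤ Q) (hP1 : 1 ≤ P)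
    (hPQ : P ≤ Q - 1) (hlow2 : -E*(2*Q^2) < 1) (hD : 0 < P + Q*E) :
    -(Q^2*E)/(P*(P+Q*E)) < bnd pn := by
  have hPpos : (0:ℝ) < P := by linarith
  have hpn1 : 0 < pn := by
    by_contra h
    have : pn = 0 := by omega
    rw [this] at hpn
    simp at hpn
    linarith
  rcases le_or_gt 0 E with hE0 | hE0
  · have h1 : -(Q^2*E)/(P*(P + Q*E)) ≤ 0 := by
      apply div_nonpos_of_nonpos_of_nonneg _ (le_of_lt (mul_pos hPpos hD))
      nlinarith [sq_nonneg Q]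
    have h2 : 0 < bnd pn := bnd_pos hpn1
    linarith
  · set e : ℝ := -E with he
    have hepos : 0 < e := by simp [he]; linarith
    have heup : 2*Q^2*e < 1 := by simp only [he]; nlinarith
    have hgoal : -(Q^2*E)/(P*(P + Q*E)) = (Q^2*e)/(P*(P - Q*e)) := by
      rw [he]; ring_nf
    rw [hgoal]
    have hDpos' : (0:ℝ) < P - Q*e := by rw [he]; nlinarith
    rcases eq_or_ne pn 1 with hone | hone
    · have hP1' : P = 1 := by rw [← hpn, hone]; norm_num
      rw [bnd, if_pos hone, div_lt_one (by nlinarith)]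
      rw [hP1']
      nlinarith
    · have hp2 : 2 ≤ pn := by omega
      have hP2 : (2:ℝ) ≤ P := by rw [← hpn]; exact_mod_cast hp2
      rw [bnd, if_neg hone, hpn]
      have hd3 : (3:ℝ) ≤ 2*P*(P-1)-1 := by nlinarith
      rw [div_lt_div_iff₀ (mul_pos hPpos hDpos') (mul_pos hPpos (by linarith : (0:ℝ) < 2*P*(P-1)-1))]
      have k1 : Q*e < 1/(2*Q) := by
        rw [lt_div_iff₀ (by linarith)]
        nlinarith
      have k2 : Q^2*e < 1/2 := by nlinarith
      have t1 : (2*P*(P-1)-1)*(Q^2*e) < (2*P*(P-1)-1)*(1/2) :=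
        mul_lt_mul_of_pos_left k2 (by linarith)
      have t2 : (P-1)*(Q*e) < (P-1)*(1/(2*Q)) :=
        mul_lt_mul_of_pos_left k1 (by linarith)
      have t3 : (P-1)*(1/(2*Q)) ≤ 1/2 := by
        rw [mul_one_div, div_le_div_iff₀ (by linarith) (by norm_num)]
        linarith
      have k5 : 0 < (P-1)*P - (P-1)*(Q*e) - (2*P*(P-1)-1)*(Q^2*e) := by nlinarith [t1, t2, t3]
      nlinarith [mul_pos hPpos k5]

lemma legendre_aux : ∀ q : ℕ, 0 < q → ∀ p : ℤ, Int.gcd p q = 1 → ∀ r : ℝ,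
    -(1/(2*(q:ℝ)^2)) < r - p/q → r - p/q < bnd q →
    ∃ L, (GenContFract.of r).convs L = (p:ℝ)/(q:ℝ) := by
  intro q
  induction q using Nat.strong_induction_on with
  | _ q ih =>
    intro hq p hgcd r hlow hup
    rcases eq_or_ne q 1 with rfl | hq1
    · -- base case q = 1
      simp only [Nat.cast_one, div_one] at hlow hup ⊢
      have hup' : r - p < 1 := by simpa [bnd] using hup
      have hlow' : -(1/2 : ℝ) < r - p := by
        have : -(1/2 : ℝ) ≤ -(1/(2*(1:ℝ)^2)) := by norm_num
        linarith
      rcases le_or_gt (p:ℝ) r with hge | hlt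
      · refine ⟨0, ?_⟩
        rw [zeroth_conv_eq_h, of_h_eq_floor]
        have : ⌊r⌋ = p := by
          rw [Int.floor_eq_iff]; constructor
          · exact hge
          · push_cast; linarith
        exact_mod_cast this
      · refine ⟨1, ?_⟩
        have hfl : ⌊r⌋ = p - 1 := by
          rw [Int.floor_eq_iff]; constructor
          · push_cast; linarith
          · push_cast; linarith
        have hfr : Int.fract r = r - (p - 1) := by
          rw [Int.fract, hfl]; push_cast; ring
        have hfr1 : (1:ℝ)/2 < Int.fract r := by rw [hfr]; push_cast; linarith
        have hfr2 : Int.fract r < 1 := Int.fract_lt_one r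
        have hfrpos : (0:ℝ) < Int.fract r := by linarith
        have hx1 : (1:ℝ) < (Int.fract r)⁻¹ := one_lt_inv_iff₀.mpr ⟨hfrpos, hfr2⟩
        have hx2 : (Int.fract r)⁻¹ < 2 := by
          rw [inv_lt_comm₀ hfrpos (by norm_num)]; linarith
        rw [convs_succ, zeroth_conv_eq_h, of_h_eq_floor]
        have hfl2 : ⌊(Int.fract r)⁻¹⌋ = 1 := by
          rw [Int.floor_eq_iff]; constructor
          · push_cast; linarith
          · push_cast; linarith
        rw [hfl2, hfl]
        push_cast; ring
    · -- step case q ≥ 2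
      have hq2 : 2 ≤ q := by omega
      have hQ2 : (2:ℝ) ≤ (q:ℝ) := by exact_mod_cast hq2
      set m : ℤ := p / (q:ℤ) with hm
      set p' : ℤ := p % (q:ℤ) with hp'
      have hqz : (0:ℤ) < (q:ℤ) := by exact_mod_cast hq
      have hp'nonneg : 0 ≤ p' := Int.emod_nonneg p (by omega)
      have hp'lt : p' < q := Int.emod_lt_of_pos p hqz
      have hp'pos : 0 < p' := by
        rcases lt_or_eq_of_le hp'nonneg with h | h
        · exact h
        · exfalso
          have hdvd : (q:ℤ) ∣ p := Int.dvd_of_emod_eq_zero h.symm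
          have h2 : (q:ℤ) ∣ (Int.gcd p q : ℤ) := Int.dvd_coe_gcd hdvd dvd_rfl
          rw [hgcd] at h2
          have := Int.le_of_dvd one_pos h2
          omega
      -- gcd of the flipped fraction
      have hgcd' : Int.gcd (q:ℤ) p' = 1 := by
        rw [← Int.isCoprime_iff_gcd_eq_one] at hgcd ⊢
        have h1 : p' = p + (q:ℤ) * (-(p/(q:ℤ))) := by rw [hp', Int.emod_def]; ring
        rw [h1]
        exact (hgcd.symm).add_mul_left_right _
      -- real versions
      have hQpos : (0:ℝ) < (q:ℝ) := by positivity
      have hP1 : (1:ℝ) ≤ (p':ℝ) := by exact_mod_cast hp'pos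
      have hPpos : (0:ℝ) < (p':ℝ) := by linarith
      have hPQ : (p':ℝ) ≤ (q:ℝ) - 1 := by
        have : p' ≤ (q:ℤ) - 1 := by omega
        have h2 : (p':ℝ) ≤ ((q:ℤ):ℝ) - 1 := by exact_mod_cast this
        push_cast at h2; exact h2
      set E : ℝ := r - (p:ℝ)/(q:ℝ) with hE
      clear_value E
      have hpsplit : (p:ℝ) = (q:ℝ) * (m:ℝ) + (p':ℝ) := by
        have := Int.mul_ediv_add_emod p (q:ℤ)
        have h2 : ((q:ℤ):ℝ) * ((p/(q:ℤ) : ℤ):ℝ) + ((p % (q:ℤ) : ℤ):ℝ) = (p:ℝ) := by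
          exact_mod_cast congrArg (fun z : ℤ => (z:ℝ)) this
        push_cast at h2 ⊢
        linarith
      have hrsplit : (p:ℝ)/(q:ℝ) = (m:ℝ) + (p':ℝ)/(q:ℝ) := by
        rw [hpsplit, add_div, mul_div_cancel_left₀ _ (ne_of_gt hQpos)]
      clear_value m p'
      have hbnd : bnd q = ((q:ℝ)-1)/((q:ℝ)*(2*(q:ℝ)*((q:ℝ)-1)-1)) := by
        rw [bnd, if_neg hq1]
      have hc3 : (3:ℝ) ≤ 2*(q:ℝ)*((q:ℝ)-1)-1 := by nlinarith
      have hcpos : (0:ℝ) < (q:ℝ)*(2*(q:ℝ)*((q:ℝ)-1)-1) := by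
        apply mul_pos <;> linarith
      have hupE : E * ((q:ℝ)*(2*(q:ℝ)*((q:ℝ)-1)-1)) < (q:ℝ)-1 := by
        rw [hbnd] at hup
        exact (lt_div_iff₀ hcpos).mp hup
      have hlow2 : -E * (2*(q:ℝ)^2) < 1 := by
        rwa [neg_lt, lt_div_iff₀ (by positivity : (0:ℝ) < 2*(q:ℝ)^2)] at hlow
      have hEup : E < 1/(2*(q:ℝ)) := by
        have h6 : ((q:ℝ)-1)/((q:ℝ)*(2*(q:ℝ)*((q:ℝ)-1)-1)) ≤ 1/(2*(q:ℝ)) := by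
          rw [div_le_div_iff₀ hcpos (by linarith)]
          nlinarith
        rw [hbnd] at hup
        linarith
      have hElow : -(1/(2*(q:ℝ)^2)) < E := hlow
      -- the floor of r is m
      have hfr0 : 0 < (p':ℝ)/(q:ℝ) + E := by
        rw [div_add' _ _ _ (ne_of_gt hQpos)]
        apply div_pos _ hQpos
        nlinarith [hlow2]
      have hfr1 : (p':ℝ)/(q:ℝ) + E < 1 := by
        rw [div_add' _ _ _ (ne_of_gt hQpos), div_lt_one hQpos]
        nlinarith
      have hr_eq : r = (m:ℝ) + ((p':ℝ)/(q:ℝ) + E) := by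
        rw [hE, hrsplit]; ring
      have hfloor : ⌊r⌋ = m := by
        have h1 : (m:ℝ) ≤ r := by rw [hr_eq]; linarith
        have h2 : r < (m:ℝ) + 1 := by rw [hr_eq]; linarith
        exact Int.floor_eq_iff.mpr ⟨h1, by push_cast; linarith⟩
      have hfract : Int.fract r = (p':ℝ)/(q:ℝ) + E := by
        rw [Int.fract, hfloor, hr_eq]; ring
      have hfractpos : 0 < Int.fract r := by rw [hfract]; exact hfr0
      have hDpos : (0:ℝ) < (p':ℝ) + (q:ℝ)*E := by
        have : (q:ℝ) * Int.fract r = (p':ℝ) + (q:ℝ)*E := by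
          rw [hfract]; field_simp
        linarith [this, mul_pos hQpos hfractpos]
      have hxval : (Int.fract r)⁻¹ = (q:ℝ)/((p':ℝ) + (q:ℝ)*E) := by
        rw [hfract, div_add' _ _ _ (ne_of_gt hQpos)]
        rw [inv_div]
        ring_nf
      -- the new error term
      have hE' : (Int.fract r)⁻¹ - (q:ℝ)/(p':ℝ) = -((q:ℝ)^2*E)/((p':ℝ)*((p':ℝ) + (q:ℝ)*E)) := by
        rw [hxval]
        field_simp
        ring
      -- bounds for the new error term
      have hlow' : -(1/(2*(p':ℝ)^2)) < (Int.fract r)⁻¹ - (q:ℝ)/(p':ℝ) := by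
        rw [hE']
        exact key_low _ _ _ hQ2 hP1 hPQ hupE hDpos
      have hPcast : ((p'.toNat : ℕ) : ℝ) = (p':ℝ) := by
        have : ((p'.toNat : ℕ) : ℤ) = p' := Int.toNat_of_nonneg hp'nonneg
        exact_mod_cast congrArg (fun z : ℤ => (z:ℝ)) this
      have hup' : (Int.fract r)⁻¹ - (q:ℝ)/(p':ℝ) < bnd p'.toNat := by
        rw [hE']
        exact key_up _ _ _ _ hPcast hQ2 hP1 hPQ hlow2 hDpos
      -- apply the induction hypothesis
      have hfract_ne : Int.fract r ≠ 0 := ne_of_gt hfractpos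
      have hlt : p'.toNat < q := by omega
      have hpos' : 0 < p'.toNat := by omega
      have hgcd'' : Int.gcd (q:ℤ) (p'.toNat : ℕ) = 1 := by
        rwa [Int.toNat_of_nonneg hp'nonneg]
      obtain ⟨L, hL⟩ := ih p'.toNat hlt hpos' (q:ℤ) hgcd'' ((Int.fract r)⁻¹)
        (by rw [hPcast]; push_cast; exact hlow') (by rw [hPcast]; push_cast; exact hup')
      refine ⟨L + 1, ?_⟩
      rw [convs_succ, hL, hfloor, hPcast]
      push_cast
      rw [hrsplit]
      rw [one_div_div]


lemma denbound (Nr bLr pbLr finv bb : ℝ) (hbL1 : 1 ≤ bLr) (hpbL0 : 0 ≤ pbLr)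
    (hfloorb : finv < bb + 1) (hNr2 : 2 ≤ Nr) (hbLN : bLr ≤ Nr)
    (hlt2N : 2*Nr^2 < bLr*(finv*bLr + pbLr)) : Nr < bb*bLr + pbLr := by
  by_contra hcon
  push_neg at hcon
  have s1 : finv * bLr + pbLr < (bb*bLr + pbLr) + bLr := by
    nlinarith [mul_lt_mul_of_pos_right hfloorb (by linarith : (0:ℝ) < bLr)]
  nlinarith [mul_lt_mul_of_pos_left s1 (by linarith : (0:ℝ) < bLr)]

lemma cross_int (a b c d : ℤ) (hb : (b:ℝ) ≠ 0) (hd : (d:ℝ) ≠ 0)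
    (h : (a:ℝ)/b = (c:ℝ)/d) : a*d = c*b := by
  rw [div_eq_div_iff hb hd] at h
  exact_mod_cast h

lemma coprime_of_det (pa pb a b : ℤ) (L : ℕ) (h : pa*b - pb*a = (-1)^L) :
    IsCoprime b a := by
  refine ⟨(-1)^L*pa, -((-1)^L*pb), ?_⟩
  have h2 : ((-1:ℤ)^L)*((-1)^L) = 1 := by
    rw [← mul_pow]; norm_num
  calc (-1)^L*pa*b + -((-1:ℤ)^L*pb)*a = (-1)^L * (pa*b - pb*a) := by ring
  _ = 1 := by rw [h, h2]

lemma det_aux_of (r : ℝ) {n : ℕ} (hyp : n = 0 ∨ ¬(GenContFract.of r).TerminatedAt (n - 1)) :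
    ((GenContFract.of r).contsAux n).a * ((GenContFract.of r).contsAux (n+1)).b -
      ((GenContFract.of r).contsAux n).b * ((GenContFract.of r).contsAux (n+1)).a = (-1)^n := by
  induction n with
  | zero => simp [contsAux]
  | succ n IH =>
    have nt : ¬TerminatedAt (GenContFract.of r) n := Or.resolve_left hyp n.succ_ne_zero
    obtain ⟨gp, hs⟩ : ∃ gp, (GenContFract.of r).s.get? n = some gp :=
      Option.ne_none_iff_exists'.1 nt
    have hga : gp.a = 1 := of_partNum_eq_one (partNum_eq_s_a hs)
    have IH' := IH (Or.inr (mt (terminated_stable (n.sub_le 1)) nt))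
    rw [contsAux_recurrence hs rfl rfl]
    dsimp only
    rw [hga, pow_succ, ← IH']
    ring

/-- **Theorem 1 (recovering a rational from its approximation).**
If `n₀/n₁` is a reduced positive rational, `N ≥ max n₁ 2`, and a real number `r`
satisfies `|r - n₀/n₁| < 1/(2N²)`, then `n₀/n₁` is one of the convergents of the
simple continued fraction expansion of `r`, and every later (defined) convergent,
viewed as a rational number in lowest terms, has denominator greater than `N`. -/
theorem exact_rational_from_approximation
    (n₀ n₁ N : ℤ) (hn₀ : 0 < n₀) (hn₁ : 0 < n₁) (hred : Int.gcd n₀ n₁ = 1)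
    (hN : max n₁ 2 ≤ N) (r : ℝ)
    (happrox : |r - (n₀ : ℝ) / (n₁ : ℝ)| < 1 / (2 * (N : ℝ) ^ 2)) :
    ∃ L : ℕ,
      (GenContFract.of r).convs L = (n₀ : ℝ) / (n₁ : ℝ) ∧
      ∀ t : ℕ, L < t → ¬(GenContFract.of r).TerminatedAt (t - 1) →
        ∀ q : ℚ, (q : ℝ) = (GenContFract.of r).convs t → (N : ℤ) < (q.den : ℤ) := by
  have hN1 : n₁ ≤ N := le_trans (le_max_left _ _) hN
  have hN2 : (2:ℤ) ≤ N := le_trans (le_max_right _ _) hN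
  have hNr1 : (n₁:ℝ) ≤ (N:ℝ) := by exact_mod_cast hN1
  have hNr2 : (2:ℝ) ≤ (N:ℝ) := by exact_mod_cast hN2
  have hn₁r : (0:ℝ) < (n₁:ℝ) := by exact_mod_cast hn₁
  have hNpos : (0:ℝ) < 2*(N:ℝ)^2 := by nlinarith
  set q : ℕ := n₁.toNat with hqdef
  have hqpos : 0 < q := by omega
  have hqcast : ((q:ℕ):ℤ) = n₁ := Int.toNat_of_nonneg (le_of_lt hn₁)
  have hqr : ((q:ℕ):ℝ) = (n₁:ℝ) := by exact_mod_cast congrArg (fun z : ℤ => (z:ℝ)) hqcast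
  have habs := abs_lt.mp happrox
  -- invoke Legendre
  have hb1 : 1/(2*(N:ℝ)^2) ≤ 1/(2*((q:ℕ):ℝ)^2) := by
    rw [hqr]
    apply one_div_le_one_div_of_le (by nlinarith)
    nlinarith
  have hb2 : 1/(2*(N:ℝ)^2) ≤ bnd q := by
    rcases eq_or_ne q 1 with h | h
    · rw [bnd, if_pos h]
      rw [div_le_one hNpos]
      nlinarith
    · rw [bnd, if_neg h]
      have hq2 : 2 ≤ q := by omega
      have hQ2 : (2:ℝ) ≤ (q:ℝ) := by exact_mod_cast hq2
      have hc3 : (3:ℝ) ≤ 2*(q:ℝ)*((q:ℝ)-1)-1 := by nlinarith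
      have hcpos : (0:ℝ) < (q:ℝ)*(2*(q:ℝ)*((q:ℝ)-1)-1) := mul_pos (by linarith) (by linarith)
      have hqN : ((q:ℕ):ℝ) ≤ (N:ℝ) := by rw [hqr]; exact hNr1
      have hq0 : (0:ℝ) < ((q:ℕ):ℝ) := by rw [hqr]; exact hn₁r
      calc 1/(2*(N:ℝ)^2) ≤ 1/(2*(q:ℝ)^2) := by
            apply one_div_le_one_div_of_le (by nlinarith)
            nlinarith
        _ ≤ ((q:ℝ)-1)/((q:ℝ)*(2*(q:ℝ)*((q:ℝ)-1)-1)) := by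
            rw [div_le_div_iff₀ (by nlinarith) hcpos]
            nlinarith
  have hgcd : Int.gcd n₀ (q:ℕ) = 1 := by rw [hqcast]; exact hred
  obtain ⟨L, hL⟩ := legendre_aux q hqpos n₀ hgcd r
    (by rw [hqr] at hb1 ⊢; linarith [habs.1, hb1])
    (by rw [hqr]; linarith [habs.2, hb2])
  rw [hqr] at hL
  refine ⟨L, hL, ?_⟩
  intro t ht hterm qq hqq
  have ht1 : 1 ≤ t := by omega
  have hnotermL : ¬(GenContFract.of r).TerminatedAt L := by
    intro h
    exact hterm (terminated_stable (by omega) h)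
  -- integer continuants at L, L+1
  obtain ⟨aL, bL, haL, hbL⟩ := exists_int_contsAux r (L+1)
  obtain ⟨paL, pbL, hpaL, hpbL⟩ := exists_int_contsAux r L
  have hdethyp : L = 0 ∨ ¬(GenContFract.of r).TerminatedAt (L-1) := by
    rcases Nat.eq_zero_or_pos L with h | h
    · exact Or.inl h
    · exact Or.inr (fun hc => hterm (terminated_stable (by omega) hc))
  have hdet : ((GenContFract.of r).contsAux L).a * ((GenContFract.of r).contsAux (L+1)).b -
      ((GenContFract.of r).contsAux L).b * ((GenContFract.of r).contsAux (L+1)).a = (-1)^L :=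
    det_aux_of r hdethyp
  have hdetZ : paL * bL - pbL * aL = (-1)^L := by
    have : ((paL * bL - pbL * aL : ℤ) : ℝ) = (((-1)^L : ℤ) : ℝ) := by
      push_cast
      rw [← haL, ← hbL, ← hpaL, ← hpbL]
      exact hdet
    exact_mod_cast this
  have hcopL : IsCoprime bL aL := coprime_of_det paL pbL aL bL L hdetZ
  -- dens L = bL  and 1 ≤ bL
  have hdL : (GenContFract.of r).dens L = (bL:ℝ) := by
    rw [den_eq_conts_b, nth_cont_eq_succ_nth_contAux, hbL]
  have hfibL : (1:ℝ) ≤ (GenContFract.of r).dens L := by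
    have h1 := succ_nth_fib_le_of_nth_den (v := r) (n := L) hdethyp
    have h2 : 1 ≤ Nat.fib (L+1) := Nat.fib_pos.mpr (Nat.succ_pos L)
    have h3 : (1:ℝ) ≤ (Nat.fib (L+1) : ℝ) := by exact_mod_cast h2
    linarith
  have hbL1 : (1:ℝ) ≤ (bL:ℝ) := by rw [← hdL]; exact hfibL
  have hbLr0 : (bL:ℝ) ≠ 0 := by linarith
  -- convs L = aL / bL, hence bL = n₁
  have hconvL : (GenContFract.of r).convs L = (aL:ℝ)/(bL:ℝ) := by
    rw [conv_eq_conts_a_div_conts_b, nth_cont_eq_succ_nth_contAux, haL, hbL]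
  have hcross : aL * n₁ = n₀ * bL :=
    cross_int aL bL n₀ n₁ hbLr0 (ne_of_gt hn₁r) (by rw [← hconvL, hL])
  have hcop01 : IsCoprime n₁ n₀ := (Int.isCoprime_iff_gcd_eq_one.mpr hred).symm
  have hbLn₁ : bL = n₁ := by
    have hd1 : bL ∣ n₁ := by
      have h1 : bL ∣ aL * n₁ := ⟨n₀, by linear_combination hcross⟩
      exact hcopL.dvd_of_dvd_mul_left h1
    have hd2 : n₁ ∣ bL := by
      have h1 : n₁ ∣ n₀ * bL := ⟨aL, by linear_combination -hcross⟩
      exact hcop01.dvd_of_dvd_mul_left h1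
    have hbL0 : (0:ℤ) ≤ bL := by
      have : (0:ℝ) ≤ (bL:ℝ) := by linarith
      exact_mod_cast this
    exact Int.dvd_antisymm hbL0 (le_of_lt hn₁) hd1 hd2
  -- stream facts at L
  have hstream' : IntFractPair.stream r (L+1) ≠ none := by
    rwa [of_terminatedAt_n_iff_succ_nth_intFractPair_stream_eq_none] at hnotermL
  obtain ⟨ifp', hifp'⟩ := Option.ne_none_iff_exists'.mp hstream'
  obtain ⟨ifp, hifp, hfrne, hifpof⟩ := IntFractPair.succ_nth_stream_eq_some_iff.mp hifp'
  have hfrpos : 0 < ifp.fr :=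
    lt_of_le_of_ne (IntFractPair.nth_stream_fr_nonneg hifp) (Ne.symm hfrne)
  have hfrlt : ifp.fr < 1 := IntFractPair.nth_stream_fr_lt_one hifp
  have hfrinv1 : 1 < ifp.fr⁻¹ := one_lt_inv_iff₀.mpr ⟨hfrpos, hfrlt⟩
  have hifpb : ifp'.b = ⌊ifp.fr⁻¹⌋ := by rw [← hifpof]; rfl
  have hfloorb : ifp.fr⁻¹ < (ifp'.b:ℝ) + 1 := by
    rw [hifpb]; push_cast; exact Int.lt_floor_add_one _
  -- the error formula at L
  have herr := sub_convs_eq (K := ℝ) hifp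
  simp only [if_neg hfrne] at herr
  rw [hbL, hpbL] at herr
  have hpbL0 : (0:ℝ) ≤ (pbL:ℝ) := by rw [← hpbL]; exact zero_le_of_contsAux_b
  have hbLpos : (0:ℝ) < (bL:ℝ) := lt_of_lt_of_le zero_lt_one hbL1
  have hDpos : (0:ℝ) < (bL:ℝ) * (ifp.fr⁻¹ * (bL:ℝ) + (pbL:ℝ)) :=
    mul_pos hbLpos (add_pos_of_pos_of_nonneg
      (mul_pos (lt_trans zero_lt_one hfrinv1) hbLpos) hpbL0)
  have habsL : |r - (GenContFract.of r).convs L| =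
      1 / ((bL:ℝ) * (ifp.fr⁻¹ * (bL:ℝ) + (pbL:ℝ))) := by
    rw [herr, abs_div, abs_neg_one_pow, abs_of_pos hDpos]
  have hlt2N : 2*(N:ℝ)^2 < (bL:ℝ) * (ifp.fr⁻¹ * (bL:ℝ) + (pbL:ℝ)) := by
    have h1 : |r - (GenContFract.of r).convs L| < 1/(2*(N:ℝ)^2) := by rw [hL]; exact happrox
    rw [habsL] at h1
    rw [div_lt_div_iff₀ hDpos hNpos] at h1
    linarith only [h1]
  -- recurrence: dens (L+1)
  have hsL : (GenContFract.of r).s.get? L = some ⟨1, (ifp'.b:ℝ)⟩ :=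
    get?_of_eq_some_of_succ_get?_intFractPair_stream hifp'
  have hrecc := contsAux_recurrence (g := GenContFract.of r) hsL rfl rfl
  have hdL1 : (GenContFract.of r).dens (L+1) = (ifp'.b:ℝ)*(bL:ℝ) + (pbL:ℝ) := by
    rw [den_eq_conts_b, nth_cont_eq_succ_nth_contAux, hrecc]
    simp [hbL, hpbL]
  -- dens (L+1) > N
  have hbLN : (bL:ℝ) ≤ (N:ℝ) := by
    rw [hbLn₁]; push_cast; exact hNr1
  have hdenL1 : (N:ℝ) < (GenContFract.of r).dens (L+1) := by
    rw [hdL1]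
    exact denbound (N:ℝ) (bL:ℝ) (pbL:ℝ) ifp.fr⁻¹ (ifp'.b:ℝ) hbL1 hpbL0 hfloorb hNr2 hbLN hlt2N
  -- dens monotone up to t
  have hmono : (GenContFract.of r).dens (L+1) ≤ (GenContFract.of r).dens t := by
    have : ∀ k : ℕ, (GenContFract.of r).dens (L+1) ≤ (GenContFract.of r).dens (L+1+k) := by
      intro k
      induction k with
      | zero => exact le_rfl
      | succ k ihk => exact le_trans ihk (of_den_mono)
    have h2 := this (t - (L+1))
    have h3 : L+1+(t-(L+1)) = t := by omega
    rwa [h3] at h2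
  -- integer continuants at t
  obtain ⟨at_, bt, hat, hbt⟩ := exists_int_contsAux r (t+1)
  obtain ⟨pat, pbt, hpat, hpbt⟩ := exists_int_contsAux r t
  have hdett : ((GenContFract.of r).contsAux t).a * ((GenContFract.of r).contsAux (t+1)).b -
      ((GenContFract.of r).contsAux t).b * ((GenContFract.of r).contsAux (t+1)).a = (-1)^t :=
    det_aux_of r (Or.inr hterm)
  have hdettZ : pat * bt - pbt * at_ = (-1)^t := by
    have : ((pat * bt - pbt * at_ : ℤ) : ℝ) = (((-1)^t : ℤ) : ℝ) := by
      push_cast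
      rw [← hat, ← hbt, ← hpat, ← hpbt]
      exact hdett
    exact_mod_cast this
  have hcopt : IsCoprime bt at_ := coprime_of_det pat pbt at_ bt t hdettZ
  have hdt : (GenContFract.of r).dens t = (bt:ℝ) := by
    rw [den_eq_conts_b, nth_cont_eq_succ_nth_contAux, hbt]
  have hbtN : (N:ℝ) < (bt:ℝ) := by
    rw [← hdt]; exact lt_of_lt_of_le hdenL1 hmono
  have hbtr0 : (bt:ℝ) ≠ 0 :=
    ne_of_gt (lt_trans (lt_of_lt_of_le zero_lt_two hNr2) hbtN)
  have hconvt : (GenContFract.of r).convs t = (at_:ℝ)/(bt:ℝ) := by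
    rw [conv_eq_conts_a_div_conts_b, nth_cont_eq_succ_nth_contAux, hat, hbt]
  -- qq = at_ / bt  in lowest terms comparison
  have hqq2 : (qq.num:ℝ)/(qq.den:ℝ) = (at_:ℝ)/(bt:ℝ) := by
    rw [← Rat.cast_def, hqq, hconvt]
  have hdenpos : (0:ℤ) < (qq.den:ℤ) := by exact_mod_cast qq.pos
  have hcross2 : qq.num * bt = at_ * (qq.den:ℤ) :=
    cross_int qq.num (qq.den:ℤ) at_ bt (by push_cast; positivity) hbtr0 (by push_cast at hqq2 ⊢; exact hqq2)
  have hdvd : bt ∣ (qq.den:ℤ) := by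
    apply hcopt.dvd_of_dvd_mul_left
    exact ⟨qq.num, by linear_combination -hcross2⟩
  have hle : bt ≤ (qq.den:ℤ) := Int.le_of_dvd hdenpos hdvd
  have : (N:ℤ) < bt := by exact_mod_cast hbtN
  omega
end

section
/- Let $x_0, x_1, \ldots, x_n$ be elements of a commutative ring, let $\mathbf{U}_{n+1}(x_0,\ldots,x_n)$ be the $(n+1)\times(n+1)$ Vandermonde matrix with $(i,j)$ entry $x_i^j$ (rows indexed $i = 0,\ldots,n$, columns indexed $j = 0,\ldots,n$), and for $0 \le i,j \le n$ let $\mathbf{D}_n(i,j)$ denote the determinant of the $n \times n$ submatrix of $\mathbf{U}_{n+1}(x_0,\ldots,x_n)$ obtained by deleting row $i+1$ and column $j+1$ (i.e., deleting the row of $x_i$ and the column of exponent $j$). Then $\mathbf{D}_n(i,j) = \delta_{n-j}(x_0,\ldots,x_{i-1},x_{i+1},\ldots,x_n) \cdot \mathbf{V}_n(x_0,\ldots,x_{i-1},x_{i+1},\ldots,x_n)$, where $\delta_k$ denotes the elementary symmetric polynomial of degree $k$ and $\mathbf{V}_n(x_0,\ldots,x_{i-1},x_{i+1},\ldots,x_n)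 = \prod_{0 \le k < l \le n,\ k \ne i,\ l \ne i} (x_l - x_k)$ is the Vandermonde determinant of the $n$ remaining values. -/
open Finset Polynomial

/-- The elementary symmetric polynomial of degree `k` evaluated at the family `v`:
`δ_k(v) = ∑_{i₁ < ⋯ < i_k} v i₁ ⋯ v i_k`. -/
def esymmVal {R : Type*} [CommRing R] {ι : Type*} [Fintype ι] [DecidableEq ι]
    (k : ℕ) (v : ι → R) : R :=
  ∑ s ∈ Finset.univ.powersetCard k, ∏ i ∈ s, v i

/-- The Vandermonde determinant (product form) of the family `v`:
`V(v) = ∏_{k < l} (v l - v k)`. -/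
def vandermondeProd {R : Type*} [CommRing R] {n : ℕ} (v : Fin n → R) : R :=
  ∏ k : Fin n, ∏ l ∈ Finset.Ioi k, (v l - v k)

lemma aux {R : Type*} [CommRing R] (n : ℕ) (y : Fin n → R) (j : Fin (n + 1)) :
    (Matrix.of fun k l : Fin n => y k ^ ((j.succAbove l : Fin (n+1)) : ℕ)).det
      = esymmVal (n - (j : ℕ)) y * vandermondeProd y := by
  classical
  set p : Fin (n+1) → R[X] := Fin.cons X (fun k => C (y k)) with hp
  have h1 : (Matrix.vandermonde p).det
      = ∑ j' : Fin (n+1), (-1) ^ (j' : ℕ) *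
          C ((Matrix.of fun k l : Fin n => y k ^ ((j'.succAbove l : Fin (n+1)) : ℕ)).det)
          * X ^ (j' : ℕ) := by
    rw [Matrix.det_succ_row_zero]
    refine Finset.sum_congr rfl fun j' _ => ?_
    have hsub : (Matrix.vandermonde p).submatrix Fin.succ j'.succAbove
        = (Matrix.of fun k l : Fin n => y k ^ ((j'.succAbove l : Fin (n+1)) : ℕ)).map C := by
      ext k l
      simp [hp, Matrix.vandermonde, map_pow]
    have hdet : ((Matrix.vandermonde p).submatrix Fin.succ j'.succAbove).det
        = C ((Matrix.of fun k l : Fin n => y k ^ ((j'.succAbove l : Fin (n+1)) : ℕ)).det) := by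
      rw [hsub]
      exact ((C : R →+* R[X]).map_det _).symm
    rw [hdet]
    have h0 : Matrix.vandermonde p 0 j' = X ^ (j' : ℕ) := by
      simp [hp, Matrix.vandermonde]
    rw [h0]; ring
  have h2 : (Matrix.vandermonde p).det
      = (-1) ^ n * C (vandermondeProd y) * ∏ k : Fin n, (X - C (y k)) := by
    rw [Matrix.det_vandermonde, Fin.prod_univ_succ]
    have ha : ∏ l ∈ Ioi (0 : Fin (n+1)), (p l - p 0)
        = (-1) ^ n * ∏ k : Fin n, (X - C (y k)) := by
      rw [Fin.prod_Ioi_zero]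
      have heach : ∀ k : Fin n, p k.succ - p 0 = (-1) * (X - C (y k)) := by
        intro k
        simp only [hp, Fin.cons_succ, Fin.cons_zero]
        ring
      rw [Finset.prod_congr rfl (fun k _ => heach k), Finset.prod_mul_distrib,
        Finset.prod_const, Finset.card_univ, Fintype.card_fin]
    have hb : ∏ k : Fin n, ∏ l ∈ Ioi k.succ, (p l - p k.succ)
        = C (vandermondeProd y) := by
      rw [vandermondeProd, map_prod]
      refine Finset.prod_congr rfl fun k _ => ?_
      rw [map_prod, Fin.prod_Ioi_succ]
      refine Finset.prod_congr rfl fun l _ => ?_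
      simp [hp]
    rw [ha, hb]; ring
  have hj : (j : ℕ) ≤ n := Nat.lt_succ_iff.mp j.isLt
  have hcoeff := congrArg (fun q => Polynomial.coeff q (j : ℕ)) (h1.symm.trans h2)
  -- LHS coefficient
  have hL : Polynomial.coeff (∑ j' : Fin (n+1), (-1) ^ (j' : ℕ) *
          C ((Matrix.of fun k l : Fin n => y k ^ ((j'.succAbove l : Fin (n+1)) : ℕ)).det)
          * X ^ (j' : ℕ)) (j : ℕ)
      = (-1) ^ (j : ℕ) * (Matrix.of fun k l : Fin n => y k ^ ((j.succAbove l : Fin (n+1)) : ℕ)).det := by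
    rw [Polynomial.finset_sum_coeff]
    rw [Finset.sum_eq_single j]
    · have h' : ((-1 : R[X]) ^ (j:ℕ) *
          C ((Matrix.of fun k l : Fin n => y k ^ ((j.succAbove l : Fin (n+1)) : ℕ)).det) * X ^ (j:ℕ))
          = C ((-1)^(j:ℕ) * (Matrix.of fun k l : Fin n => y k ^ ((j.succAbove l : Fin (n+1)) : ℕ)).det)
            * X ^ (j:ℕ) := by
        simp
      rw [h', Polynomial.coeff_C_mul, Polynomial.coeff_X_pow, if_pos rfl, mul_one]
    · intro j' _ hne
      have h' : ((-1 : R[X]) ^ (j':ℕ) *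
          C ((Matrix.of fun k l : Fin n => y k ^ ((j'.succAbove l : Fin (n+1)) : ℕ)).det) * X ^ (j':ℕ))
          = C ((-1)^(j':ℕ) * (Matrix.of fun k l : Fin n => y k ^ ((j'.succAbove l : Fin (n+1)) : ℕ)).det)
            * X ^ (j':ℕ) := by
        simp
      rw [h', Polynomial.coeff_C_mul, Polynomial.coeff_X_pow, if_neg, mul_zero]
      exact fun h => hne (Fin.ext h.symm)
    · intro h; exact absurd (Finset.mem_univ j) h
  have hR : Polynomial.coeff ((-1 : R[X]) ^ n * C (vandermondeProd y) *
        ∏ k : Fin n, (X - C (y k))) (j : ℕ)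
      = (-1)^n * vandermondeProd y * ((-1)^(n - (j:ℕ)) * esymmVal (n - (j:ℕ)) y) := by
    have hprod : (∏ k : Fin n, (X - C (y k)))
        = ((Finset.univ.val.map y).map (fun t => X - C t)).prod := by
      rw [Multiset.map_map]
      rfl
    have hcard : Multiset.card (Finset.univ.val.map y) = n := by simp
    have hv := Multiset.prod_X_sub_C_coeff (Finset.univ.val.map y)
      (k := (j:ℕ)) (by rw [hcard]; exact hj)
    rw [hcard] at hv
    have he : (Finset.univ.val.map y).esymm (n - (j:ℕ)) = esymmVal (n - (j:ℕ)) y :=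
      Finset.esymm_map_val y Finset.univ (n - (j:ℕ))
    have hpm : ((-1 : R[X]) ^ n * C (vandermondeProd y) * ∏ k : Fin n, (X - C (y k)))
        = C ((-1)^n * vandermondeProd y) * ((Finset.univ.val.map y).map (fun t => X - C t)).prod := by
      rw [← hprod]
      simp [mul_comm]
    rw [hpm, Polynomial.coeff_C_mul, hv, he]
  have ht : ((-1:R) ^ (j:ℕ)) * ((-1:R) ^ (j:ℕ)) = 1 := by
    rw [← pow_add, ← two_mul, pow_mul, neg_one_sq, one_pow]
  have hsign : ((-1:R) ^ (j:ℕ)) * ((-1:R)^n * ((-1:R)^(n - (j:ℕ)))) = 1 := by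
    rw [← pow_add, ← pow_add, show (j:ℕ) + (n + (n - (j:ℕ))) = 2*n from by omega,
      pow_mul, neg_one_sq, one_pow]
  set D := (Matrix.of fun k l : Fin n => y k ^ ((j.succAbove l : Fin (n+1)) : ℕ)).det with hD
  have key : (-1:R)^(j:ℕ) * D = (-1)^n * vandermondeProd y *
      ((-1)^(n - (j:ℕ)) * esymmVal (n - (j:ℕ)) y) := by
    rw [← hL, hcoeff, hR]
  calc D = (-1:R)^(j:ℕ) * ((-1:R)^(j:ℕ) * D) := by rw [← mul_assoc, ht, one_mul]
    _ = (-1:R)^(j:ℕ) * ((-1)^n * vandermondeProd y *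
        ((-1)^(n - (j:ℕ)) * esymmVal (n - (j:ℕ)) y)) := by rw [key]
    _ = ((-1:R) ^ (j:ℕ) * ((-1:R)^n * ((-1:R)^(n - (j:ℕ))))) *
        (esymmVal (n - (j:ℕ)) y * vandermondeProd y) := by ring
    _ = esymmVal (n - (j:ℕ)) y * vandermondeProd y := by rw [hsign, one_mul]

/-- **Generalized Vandermonde determinants.**
Deleting row `i` (the row of node `xᵢ`) and column `j` (the column of exponent `j`)
from the `(n+1) × (n+1)` Vandermonde matrix `(x_i^j)` yields a matrix whose
determinant is `δ_{n-j}` of the remaining `n` nodes times the Vandermonde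
determinant of the remaining `n` nodes. -/
theorem generalized_vandermonde_det
    {R : Type*} [CommRing R] (n : ℕ) (x : Fin (n + 1) → R) (i j : Fin (n + 1)) :
    ((Matrix.vandermonde x).submatrix i.succAbove j.succAbove).det =
      esymmVal (n - (j : ℕ)) (x ∘ i.succAbove) *
        vandermondeProd (x ∘ i.succAbove) := by
  exact aux n (x ∘ i.succAbove) j
end

section
/- Let $x_0, x_1, \ldots, x_n$ be pairwise distinct real numbers, and let $f_0, \ldots, f_n$ and $\tilde{f}_0, \ldots, \tilde{f}_n$ be real numbers. Let $a_0, \ldots, a_n$ and $\tilde{a}_0, \ldots, \tilde{a}_n$ be the unique solutions of the Vandermonde systems $\sum_{j=0}^n a_j x_i^j = f_i$ and $\sum_{j=0}^n \tilde{a}_j x_i^j = \tilde{f}_i$ for $i = 0, \ldots, n$. Set $\varepsilon = \max_{0 \le i \le n} |f_i - \tilde{f}_i|$, $\lambda_x = \min_{i \ne j} |x_j - x_i|$, and $M = \max\{1, \max_{0 \le i \le n} |x_i|\}$. Then for every $j$ with $0 \le j \le n$, $|a_j - \tilde{a}_j| \le \dfrac{\varepsilon}{\lambda_x^n} (n+1)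 \binom{n}{\lfloor n/2 \rfloor} M^{n}$, where $\lfloor \cdot \rfloor$ is the floor function and $\binom{n}{\lfloor n/2\rfloor}$ is a binomial coefficient. -/
open Finset
open Polynomial

lemma coeff_prod_X_sub_C_abs_le (M : ℝ) (hM0 : 0 ≤ M) {ι : Type*} [DecidableEq ι] (v : ι → ℝ) :
    ∀ (s : Finset ι), (∀ k ∈ s, |v k| ≤ M) → ∀ j,
      |(∏ k ∈ s, (X - C (v k))).coeff j| ≤ (s.card.choose j) * M ^ (s.card - j) := by
  intro s
  induction s using Finset.induction_on with
  | empty =>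
    intro _ j
    rcases j with _ | j <;> simp [coeff_one]
  | insert b s has ih =>
    intro hM j
    have hb : |v b| ≤ M := hM b (mem_insert_self _ _)
    have hMs : ∀ k ∈ s, |v k| ≤ M := fun k hk => hM k (mem_insert_of_mem hk)
    rw [Finset.prod_insert has, mul_comm, Finset.card_insert_of_notMem has]
    set q := ∏ k ∈ s, (X - C (v k)) with hq
    set m := s.card with hm
    rcases j with _ | k
    · rw [Polynomial.mul_coeff_zero]
      have : |(q.coeff 0) * (X - C (v b)).coeff 0| ≤ (m.choose 0 * M ^ (m - 0)) * M := by
        rw [abs_mul]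
        apply mul_le_mul (ih hMs 0) ?_ (abs_nonneg _) ?_
        · simpa using hb
        · positivity
      refine this.trans (le_of_eq ?_)
      simp [pow_succ]
    · rw [coeff_mul_X_sub_C]
      have h1 := ih hMs k
      have h2 := ih hMs (k + 1)
      have e2 : |q.coeff (k+1) * v b| ≤ (m.choose (k+1)) * M ^ (m - (k+1)) * M := by
        rw [abs_mul]
        apply mul_le_mul h2 hb (abs_nonneg _) (by positivity)
      have h3 : (m.choose (k+1) : ℝ) * M ^ (m - (k+1)) * M ≤ m.choose (k+1) * M ^ (m - k) := by
        rcases le_or_gt (k+1) m with h | h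
        · rw [mul_assoc, ← pow_succ]
          have : m - (k+1) + 1 = m - k := by omega
          rw [this]
        · rw [Nat.choose_eq_zero_of_lt h]; simp
      calc |q.coeff k - q.coeff (k+1) * v b| ≤ |q.coeff k| + |q.coeff (k+1) * v b| := by
              exact (abs_sub _ _).trans (by rw [abs_mul])
        _ ≤ (m.choose k) * M ^ (m - k) + (m.choose (k+1)) * M ^ (m - k) :=
              add_le_add h1 (e2.trans h3)
        _ = ((m + 1).choose (k + 1)) * M ^ (m + 1 - (k + 1)) := by
              rw [Nat.succ_sub_succ, ← add_mul, Nat.choose_succ_succ]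
              push_cast
              ring


/-- **Error estimate for coefficients of the approximate interpolation polynomial
(Theorem 8).** If `a` and `ã` solve the Vandermonde interpolation systems for data
`f` and `f̃` respectively at pairwise distinct nodes `x₀, …, xₙ`, with
`ε = max_i |f_i - f̃_i|`, `λₓ = min_{i ≠ j} |x_j - x_i|`, and
`M = max {1, max_i |x_i|}`, then every coefficient error satisfies
`|a_j - ã_j| ≤ (ε / λₓⁿ) (n+1) C(n, ⌊n/2⌋) Mⁿ`. -/
theorem univariate_interpolation_coefficient_error
    (n : ℕ) (x : Fin (n + 1) → ℝ) (hx : Function.Injective x)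
    (f ftilde a atilde : Fin (n + 1) → ℝ)
    (ha : ∀ i, ∑ j : Fin (n + 1), a j * x i ^ (j : ℕ) = f i)
    (hatilde : ∀ i, ∑ j : Fin (n + 1), atilde j * x i ^ (j : ℕ) = ftilde i)
    (ε lamx M : ℝ)
    (hε : ε = Finset.univ.sup' Finset.univ_nonempty (fun i => |f i - ftilde i|))
    (hlam : IsLeast {d : ℝ | ∃ i j : Fin (n + 1), i ≠ j ∧ d = |x j - x i|} lamx)
    (hM : M = max 1 (Finset.univ.sup' Finset.univ_nonempty (fun i => |x i|))) :
    ∀ j : Fin (n + 1),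
      |a j - atilde j| ≤ ε / lamx ^ n * (n + 1) * (n.choose (n / 2)) * M ^ n := by
  intro j
  -- basic facts
  have hM1 : (1 : ℝ) ≤ M := hM ▸ le_max_left _ _
  have hM0 : (0 : ℝ) ≤ M := zero_le_one.trans hM1
  have hMx : ∀ i, |x i| ≤ M := fun i =>
    hM ▸ le_max_of_le_right (Finset.le_sup' (fun i => |x i|) (mem_univ i))
  have hεf : ∀ i, |f i - ftilde i| ≤ ε := fun i =>
    hε ▸ Finset.le_sup' (fun i => |f i - ftilde i|) (mem_univ i)
  have hε0 : 0 ≤ ε := (abs_nonneg _).trans (hεf 0)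
  have hlam0 : 0 < lamx := by
    obtain ⟨i, k, hik, hd⟩ := hlam.1
    rw [hd]
    exact abs_pos.mpr (sub_ne_zero.mpr (fun h => hik (hx h).symm))
  have hlamle : ∀ i k : Fin (n+1), i ≠ k → lamx ≤ |x k - x i| := fun i k h =>
    hlam.2 ⟨i, k, h, rfl⟩
  -- the difference polynomial
  set p : ℝ[X] := ∑ k : Fin (n+1), C (a k - atilde k) * X ^ (k : ℕ) with hp
  have hpc : ∀ k : Fin (n+1), p.coeff k = a k - atilde k := by
    intro k
    rw [hp, finset_sum_coeff]
    simp only [coeff_C_mul, coeff_X_pow]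
    rw [Finset.sum_eq_single k] <;> simp +contextual [Fin.val_eq_val, eq_comm]
  have hpeval : ∀ i ∈ Finset.univ, p.eval (x i) = f i - ftilde i := by
    intro i _
    rw [hp]
    simp only [eval_finset_sum, eval_mul, eval_C, eval_pow, eval_X, sub_mul]
    rw [Finset.sum_sub_distrib, ha i, hatilde i]
  have hdeg : p.degree < (Finset.univ : Finset (Fin (n+1))).card := by
    rw [Finset.card_univ, Fintype.card_fin]
    refine lt_of_le_of_lt (degree_sum_le _ _) ?_
    rw [Finset.sup_lt_iff (by exact_mod_cast WithBot.bot_lt_coe (n+1))]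
    intro k _
    refine lt_of_le_of_lt (degree_C_mul_X_pow_le _ _) ?_
    exact_mod_cast Nat.lt_succ_of_le (Fin.is_le k)
  have hinj : Set.InjOn x ↑(Finset.univ : Finset (Fin (n+1))) := hx.injOn
  have heq : p = Lagrange.interpolate Finset.univ x (fun i => f i - ftilde i) :=
    Lagrange.eq_interpolate_of_eval_eq _ hinj hdeg hpeval
  -- coefficient of the interpolation polynomial
  have hcoeff : a j - atilde j =
      ∑ i : Fin (n+1), (f i - ftilde i) * (Lagrange.basis Finset.univ x i).coeff j := by
    rw [← hpc j, heq, Lagrange.interpolate_apply, finset_sum_coeff]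
    simp [sub_mul, coeff_sub, coeff_C_mul]
  rw [hcoeff]
  -- bound each basis coefficient
  have key : ∀ i : Fin (n+1), |(Lagrange.basis Finset.univ x i).coeff j| ≤
      (n.choose (n/2)) * M ^ n / lamx ^ n := by
    intro i
    rw [Lagrange.basis]
    have hrw : ∏ k ∈ Finset.univ.erase i, Lagrange.basisDivisor (x i) (x k) =
        C (∏ k ∈ Finset.univ.erase i, (x i - x k)⁻¹) *
          ∏ k ∈ Finset.univ.erase i, (X - C (x k)) := by
      rw [map_prod, ← Finset.prod_mul_distrib]
      rfl
    rw [hrw, coeff_C_mul, abs_mul]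
    have hcard : (Finset.univ.erase i).card = n := by
      rw [Finset.card_erase_of_mem (mem_univ i), Finset.card_univ, Fintype.card_fin]
      rfl
    have h1 : |∏ k ∈ Finset.univ.erase i, (x i - x k)⁻¹| ≤ (lamx ^ n)⁻¹ := by
      rw [abs_prod]
      calc ∏ k ∈ Finset.univ.erase i, |(x i - x k)⁻¹|
          ≤ ∏ _k ∈ Finset.univ.erase i, lamx⁻¹ := by
            refine Finset.prod_le_prod (fun k _ => abs_nonneg _) (fun k hk => ?_)
            rw [abs_inv]
            refine inv_anti₀ hlam0 ?_
            rw [abs_sub_comm]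
            exact hlamle i k (Finset.ne_of_mem_erase hk).symm
        _ = (lamx ^ n)⁻¹ := by rw [Finset.prod_const, hcard, inv_pow]
    have h2 : |(∏ k ∈ Finset.univ.erase i, (X - C (x k))).coeff j| ≤
        (n.choose (n/2)) * M ^ n := by
      refine le_trans (coeff_prod_X_sub_C_abs_le M hM0 x _ (fun k _ => hMx k) j) ?_
      rw [hcard]
      have c1 : (n.choose j : ℝ) ≤ n.choose (n/2) := by
        exact_mod_cast Nat.choose_le_middle j n
      have c2 : M ^ (n - (j:ℕ)) ≤ M ^ n := pow_le_pow_right₀ hM1 (Nat.sub_le _ _)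
      exact mul_le_mul c1 c2 (by positivity) (by positivity)
    calc |∏ k ∈ Finset.univ.erase i, (x i - x k)⁻¹| *
          |(∏ k ∈ Finset.univ.erase i, (X - C (x k))).coeff j|
        ≤ (lamx ^ n)⁻¹ * ((n.choose (n/2)) * M ^ n) :=
          mul_le_mul h1 h2 (abs_nonneg _) (by positivity)
      _ = (n.choose (n/2)) * M ^ n / lamx ^ n := by ring
  calc |∑ i : Fin (n+1), (f i - ftilde i) * (Lagrange.basis Finset.univ x i).coeff j|
      ≤ ∑ i : Fin (n+1), |(f i - ftilde i) * (Lagrange.basis Finset.univ x i).coeff j| :=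
        Finset.abs_sum_le_sum_abs _ _
    _ ≤ ∑ _i : Fin (n+1), ε * ((n.choose (n/2)) * M ^ n / lamx ^ n) := by
        refine Finset.sum_le_sum (fun i _ => ?_)
        rw [abs_mul]
        exact mul_le_mul (hεf i) (key i) (abs_nonneg _)
          hε0
    _ = ε / lamx ^ n * (n + 1) * (n.choose (n / 2)) * M ^ n := by
        rw [Finset.sum_const, Finset.card_univ, Fintype.card_fin]
        push_cast
        ring
end

section
/- Let $x_0, x_1, \ldots, x_n$ be pairwise distinct real numbers, and let $f_0, \ldots, f_n$ and $\tilde{f}_0, \ldots, \tilde{f}_n$ be real numbers. Let $a_0, \ldots, a_n$ and $\tilde{a}_0, \ldots, \tilde{a}_n$ be the unique solutions of the Vandermonde systems $\sum_{j=0}^n a_j x_i^j = f_i$ and $\sum_{j=0}^n \tilde{a}_j x_i^j = \tilde{f}_i$ for $i = 0, \ldots, n$. Set $\varepsilon = \max_{0 \le i \le n} |f_i - \tilde{f}_i|$, $\lambda_x = \min_{i \ne j} |x_j - x_i|$, and $M = \max\{1, \max_{0 \le i \le n} |x_i|\}$. Then for every $j$ with $0 \le j \le n$, the sharper per-coefficient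 bound $|a_j - \tilde{a}_j| \le \dfrac{\varepsilon}{\lambda_x^n} (n+1) \binom{n}{j} M^{n-j}$ holds. -/
open Finset

open Polynomial in
/-- Coefficient bound for `∏ (X - C (x k))` over a finset. -/
lemma aux_prod_coeff_bound {ι : Type*} [DecidableEq ι] (s : Finset ι) (x : ι → ℝ) (M : ℝ)
    (hM : ∀ k, |x k| ≤ M) (hM0 : 0 ≤ M) {j : ℕ} (hj : j ≤ s.card) :
    |(∏ k ∈ s, (X - C (x k))).coeff j| ≤ (s.card.choose j : ℝ) * M ^ (s.card - j) := by
  have h1 : (∏ k ∈ s, (X - C (x k))) = ∏ k ∈ s, (X + C (-(x k))) := by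
    simp [sub_eq_add_neg]
  rw [h1, Finset.prod_X_add_C_coeff s (fun k => -x k) hj]
  calc |∑ t ∈ s.powersetCard (s.card - j), ∏ k ∈ t, (-x k)|
      ≤ ∑ t ∈ s.powersetCard (s.card - j), |∏ k ∈ t, (-x k)| :=
        Finset.abs_sum_le_sum_abs _ _
    _ ≤ ∑ t ∈ s.powersetCard (s.card - j), M ^ (s.card - j) := by
        refine Finset.sum_le_sum fun t ht => ?_
        have htc : t.card = s.card - j := (Finset.mem_powersetCard.mp ht).2
        rw [Finset.abs_prod, ← htc, ← Finset.prod_const]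
        exact Finset.prod_le_prod (fun k _ => abs_nonneg _)
          (fun k _ => by rw [abs_neg]; exact hM k)
    _ = (s.card.choose j : ℝ) * M ^ (s.card - j) := by
        rw [Finset.sum_const, Finset.card_powersetCard, nsmul_eq_mul,
          Nat.choose_symm hj]

/-- **Sharper per-coefficient error estimate for approximate interpolation.**
If `a` and `ã` solve the Vandermonde interpolation systems for data `f` and `f̃`
respectively at pairwise distinct nodes `x₀, …, xₙ`, with `ε = max_i |f_i - f̃_i|`,
`λₓ = min_{i ≠ j} |x_j - x_i|`, and `M = max {1, max_i |x_i|}`, then for each `j`,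
`|a_j - ã_j| ≤ (ε / λₓⁿ) (n+1) C(n, j) M^{n-j}`. -/
theorem univariate_interpolation_coefficient_error_sharp
    (n : ℕ) (x : Fin (n + 1) → ℝ) (hx : Function.Injective x)
    (f ftilde a atilde : Fin (n + 1) → ℝ)
    (ha : ∀ i, ∑ j : Fin (n + 1), a j * x i ^ (j : ℕ) = f i)
    (hatilde : ∀ i, ∑ j : Fin (n + 1), atilde j * x i ^ (j : ℕ) = ftilde i)
    (ε lamx M : ℝ)
    (hε : ε = Finset.univ.sup' Finset.univ_nonempty (fun i => |f i - ftilde i|))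
    (hlam : IsLeast {d : ℝ | ∃ i j : Fin (n + 1), i ≠ j ∧ d = |x j - x i|} lamx)
    (hM : M = max 1 (Finset.univ.sup' Finset.univ_nonempty (fun i => |x i|))) :
    ∀ j : Fin (n + 1),
      |a j - atilde j| ≤
        ε / lamx ^ n * (n + 1) * (n.choose (j : ℕ)) * M ^ (n - (j : ℕ)) := by
  classical
  intro j
  -- basic facts about lamx, M, ε
  obtain ⟨⟨i₀, j₀, hij₀, hlam_eq⟩, hlb⟩ := hlam
  have hlam_pos : 0 < lamx := by
    rw [hlam_eq]
    exact abs_pos.mpr (sub_ne_zero.mpr fun h => hij₀ (hx h).symm)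
  have hlam_le : ∀ i k : Fin (n + 1), i ≠ k → lamx ≤ |x i - x k| := by
    intro i k hik
    exact hlb ⟨k, i, hik.symm, rfl⟩
  have hM1 : (1 : ℝ) ≤ M := hM ▸ le_max_left _ _
  have hM0 : (0 : ℝ) ≤ M := le_trans zero_le_one hM1
  have hMx : ∀ k, |x k| ≤ M := fun k =>
    hM ▸ le_trans (Finset.le_sup' (fun i => |x i|) (Finset.mem_univ k)) (le_max_right _ _)
  set g : Fin (n + 1) → ℝ := fun i => f i - ftilde i with hgdef
  have hgε : ∀ i, |g i| ≤ ε := fun i => hε ▸ Finset.le_sup' (fun i => |f i - ftilde i|) (Finset.mem_univ i)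
  have hε0 : (0 : ℝ) ≤ ε := le_trans (abs_nonneg _) (hgε 0)
  -- the difference polynomial
  set p : Polynomial ℝ := ∑ k : Fin (n + 1), Polynomial.monomial (k : ℕ) (a k - atilde k) with hp
  have hpc : ∀ k : Fin (n + 1), p.coeff (k : ℕ) = a k - atilde k := by
    intro k
    rw [hp, Polynomial.finset_sum_coeff]
    rw [Finset.sum_eq_single k]
    · simp
    · intro b _ hb
      rw [Polynomial.coeff_monomial, if_neg (by simpa [Fin.val_eq_val] using hb)]
    · simp
  have hpev : ∀ i, p.eval (x i) = g i := by
    intro i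
    rw [hp, Polynomial.eval_finset_sum]
    simp only [Polynomial.eval_monomial, sub_mul]
    rw [Finset.sum_sub_distrib, ha i, hatilde i]
  have hcard : (Finset.univ : Finset (Fin (n + 1))).card = n + 1 := by simp
  have hdeg : p.degree < ((Finset.univ : Finset (Fin (n + 1))).card : ℕ) := by
    rw [hcard]
    refine lt_of_le_of_lt (Polynomial.degree_sum_le _ _) ?_
    rw [Finset.sup_lt_iff (by exact_mod_cast WithBot.bot_lt_coe (n + 1))]
    intro k _
    refine lt_of_le_of_lt (Polynomial.degree_monomial_le _ _) ?_
    exact_mod_cast Nat.lt_succ_of_le (Fin.is_le k)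
  have hinj : Set.InjOn x (Finset.univ : Finset (Fin (n + 1))) := fun i _ k _ h => hx h
  have hpeq : p = Lagrange.interpolate Finset.univ x g :=
    Lagrange.eq_interpolate_of_eval_eq (r := g) hinj hdeg fun i _ => hpev i
  -- coefficient formula
  have hjle : (j : ℕ) ≤ n := Fin.is_le j
  have hcoeff : a j - atilde j =
      ∑ i : Fin (n + 1), g i * (Lagrange.basis Finset.univ x i).coeff (j : ℕ) := by
    rw [← hpc j, hpeq, Lagrange.interpolate_apply, Polynomial.finset_sum_coeff]
    exact Finset.sum_congr rfl fun i _ => by rw [Polynomial.coeff_C_mul]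
  rw [hcoeff]
  -- bound each basis coefficient
  have hbb : ∀ i : Fin (n + 1),
      |(Lagrange.basis Finset.univ x i).coeff (j : ℕ)| ≤
        (lamx ^ n)⁻¹ * ((n.choose (j : ℕ) : ℝ) * M ^ (n - (j : ℕ))) := by
    intro i
    have hecard : (Finset.univ.erase i).card = n := by
      rw [Finset.card_erase_of_mem (Finset.mem_univ i), hcard]
      omega
    have hsplit : Lagrange.basis Finset.univ x i =
        Polynomial.C (∏ k ∈ Finset.univ.erase i, (x i - x k)⁻¹) *
          ∏ k ∈ Finset.univ.erase i, (Polynomial.X - Polynomial.C (x k)) := by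
      rw [Lagrange.basis]
      simp only [Lagrange.basisDivisor]
      rw [Finset.prod_mul_distrib, map_prod]
    rw [hsplit, Polynomial.coeff_C_mul, abs_mul]
    have h1 : |∏ k ∈ Finset.univ.erase i, (x i - x k)⁻¹| ≤ (lamx ^ n)⁻¹ := by
      rw [Finset.abs_prod]
      have hstep : ∀ k ∈ Finset.univ.erase i, |(x i - x k)⁻¹| ≤ lamx⁻¹ := by
        intro k hk
        rw [abs_inv]
        exact inv_anti₀ hlam_pos (hlam_le i k (Finset.ne_of_mem_erase hk).symm)
      calc ∏ k ∈ Finset.univ.erase i, |(x i - x k)⁻¹|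
          ≤ ∏ _k ∈ Finset.univ.erase i, lamx⁻¹ :=
            Finset.prod_le_prod (fun k _ => abs_nonneg _) hstep
        _ = (lamx ^ n)⁻¹ := by rw [Finset.prod_const, hecard, inv_pow]
    have h2 : |(∏ k ∈ Finset.univ.erase i, (Polynomial.X - Polynomial.C (x k))).coeff (j : ℕ)| ≤
        (n.choose (j : ℕ) : ℝ) * M ^ (n - (j : ℕ)) := by
      have := aux_prod_coeff_bound (Finset.univ.erase i) x M hMx hM0
        (j := (j : ℕ)) (by rw [hecard]; exact hjle)
      rwa [hecard] at this
    exact mul_le_mul h1 h2 (abs_nonneg _) (by positivity)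
  -- assemble
  calc |∑ i : Fin (n + 1), g i * (Lagrange.basis Finset.univ x i).coeff (j : ℕ)|
      ≤ ∑ i : Fin (n + 1), |g i * (Lagrange.basis Finset.univ x i).coeff (j : ℕ)| :=
        Finset.abs_sum_le_sum_abs _ _
    _ ≤ ∑ i : Fin (n + 1), ε * ((lamx ^ n)⁻¹ * ((n.choose (j : ℕ) : ℝ) * M ^ (n - (j : ℕ)))) := by
        refine Finset.sum_le_sum fun i _ => ?_
        rw [abs_mul]
        exact mul_le_mul (hgε i) (hbb i) (abs_nonneg _) hε0
    _ = ε / lamx ^ n * (n + 1) * (n.choose (j : ℕ)) * M ^ (n - (j : ℕ)) := by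
        rw [Finset.sum_const, hcard, nsmul_eq_mul]
        push_cast
        field_simp
end

section
/- Let $x_0, \ldots, x_n$ be pairwise distinct real numbers, and let $N \ge 1$. Set $\lambda_x = \min_{i \ne j}|x_j - x_i|$, $M = \max\{1, \max_i |x_i|\}$, and $\varepsilon = \dfrac{\lambda_x^n}{2(n+1)\binom{n}{\lfloor n/2 \rfloor} M^n N^2}$. Let $f_0, \ldots, f_n$ and $\tilde{f}_0, \ldots, \tilde{f}_n$ be real numbers with $|f_i - \tilde{f}_i| < \varepsilon$ for all $i$, and let $(a_j)$ and $(\tilde{a}_j)$ be the unique solutions of the Vandermonde systems $\sum_{j=0}^n a_j x_i^j = f_i$ and $\sum_{j=0}^n \tilde{a}_j x_i^j = \tilde{f}_i$. Then $|a_j - \tilde{a}_j| < \dfrac{1}{2N^2}$ for every $j$ with $0 \le j \le n$. Consequently, if each $a_j$ is a rational number whose denominator (in lowest terms) is at most $N$, then $a_j$ is the unique rational number with denominator at most $N$ lying within $1/(2N^2)$ of $\tilde{a}_j$. -/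
open Finset

open Polynomial in
lemma aux_rat_sep (q q' : ℚ) (h : q ≠ q') :
    1 / ((q.den : ℝ) * q'.den) ≤ |(q : ℝ) - (q' : ℝ)| := by
  have hr : (q - q' : ℚ) ≠ 0 := sub_ne_zero.mpr h
  have hdvd : (q - q').den ∣ q.den * q'.den := by
    have := Rat.add_den_dvd q (-q')
    rwa [← sub_eq_add_neg, Rat.neg_den] at this
  have hpos : 0 < q.den * q'.den := Nat.mul_pos q.pos q'.pos
  have hden_le : ((q - q').den : ℝ) ≤ (q.den : ℝ) * q'.den := by
    exact_mod_cast Nat.le_of_dvd hpos hdvd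
  have hdpos : (0:ℝ) < ((q - q').den : ℝ) := by exact_mod_cast (q - q').pos
  have h1 : 1 / (((q - q').den) : ℝ) ≤ |((q - q' : ℚ) : ℝ)| := by
    rw [Rat.cast_def, abs_div]
    have hnum : (1:ℝ) ≤ |((q - q').num : ℝ)| := by
      have : 1 ≤ |(q - q').num| := Int.one_le_abs (Rat.num_ne_zero.mpr hr)
      exact_mod_cast this
    rw [Nat.abs_cast]
    gcongr

  calc 1 / ((q.den : ℝ) * q'.den) ≤ 1 / (((q - q').den) : ℝ) := by
        apply one_div_le_one_div_of_le hdpos hden_le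
    _ ≤ |((q - q' : ℚ) : ℝ)| := h1
    _ = |(q : ℝ) - (q' : ℝ)| := by push_cast; ring_nf


open Polynomial in
lemma aux_prod_coeff {ι : Type*} (t : Finset ι) (v : ι → ℝ) (M : ℝ)
    (hv : ∀ k ∈ t, |v k| ≤ M) (j : ℕ) (hj : j ≤ t.card) :
    |(∏ k ∈ t, (X - C (v k))).coeff j| ≤ (t.card.choose (t.card - j)) * M ^ (t.card - j) := by
  have hprod : ∏ k ∈ t, (X - C (v k)) = ((t.val.map v).map fun r => X - C r).prod := by
    rw [Multiset.map_map]; rfl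
  have hcard : Multiset.card (t.val.map v) = t.card := by simp
  rw [hprod, Multiset.prod_X_sub_C_coeff _ (by rw [hcard]; exact hj), hcard]
  rw [abs_mul, abs_pow, abs_neg, abs_one, one_pow, one_mul]
  rw [Finset.esymm_map_val]
  set m := t.card - j
  calc |∑ u ∈ t.powersetCard m, ∏ k ∈ u, v k|
      ≤ ∑ u ∈ t.powersetCard m, |∏ k ∈ u, v k| := Finset.abs_sum_le_sum_abs _ _
    _ ≤ ∑ _u ∈ t.powersetCard m, M ^ m := by
        apply Finset.sum_le_sum
        intro u hu
        obtain ⟨hsub, hcardu⟩ := Finset.mem_powersetCard.mp hu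
        rw [Finset.abs_prod]
        calc ∏ k ∈ u, |v k| ≤ ∏ _k ∈ u, M :=
              Finset.prod_le_prod (fun _ _ => abs_nonneg _) (fun k hk => hv k (hsub hk))
          _ = M ^ m := by rw [Finset.prod_const, hcardu]
    _ = (t.card.choose m) * M ^ m := by
        rw [Finset.sum_const, Finset.card_powersetCard, nsmul_eq_mul]

/-- **Correctness of the recovery algorithm for univariate interpolation.**
With pairwise distinct nodes `x₀, …, xₙ`, `N ≥ 1`,
`λₓ = min_{i≠j}|x_j - x_i|`, `M = max {1, max |xᵢ|}`, and the error control
`ε = λₓⁿ / (2 (n+1) C(n,⌊n/2⌋) Mⁿ N²)`, if the data satisfy `|f_i - f̃_i| < ε`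
for all `i`, then the coefficients of the two interpolation polynomials satisfy
`|a_j - ã_j| < 1/(2N²)` for every `j`; consequently, whenever `a_j` is a rational
number with denominator at most `N`, it is the unique rational number with
denominator at most `N` lying within `1/(2N²)` of `ã_j`. -/
theorem exact_univariate_interpolation_recovery
    (n : ℕ) (x : Fin (n + 1) → ℝ) (hx : Function.Injective x)
    (N : ℕ) (hN : 1 ≤ N)
    (lamx M ε : ℝ)
    (hlam : IsLeast {d : ℝ | ∃ i j : Fin (n + 1), i ≠ j ∧ d = |x j - x i|} lamx)
    (hM : M = max 1 (Finset.univ.sup' Finset.univ_nonempty (fun i => |x i|)))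
    (hε : ε = lamx ^ n / (2 * (n + 1) * (n.choose (n / 2)) * M ^ n * (N : ℝ) ^ 2))
    (f ftilde a atilde : Fin (n + 1) → ℝ)
    (hf : ∀ i, |f i - ftilde i| < ε)
    (ha : ∀ i, ∑ j : Fin (n + 1), a j * x i ^ (j : ℕ) = f i)
    (hatilde : ∀ i, ∑ j : Fin (n + 1), atilde j * x i ^ (j : ℕ) = ftilde i) :
    (∀ j : Fin (n + 1), |a j - atilde j| < 1 / (2 * (N : ℝ) ^ 2)) ∧
    (∀ j : Fin (n + 1), ∀ q : ℚ, (q : ℝ) = a j → q.den ≤ N →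
      (q.den ≤ N ∧ |atilde j - (q : ℝ)| < 1 / (2 * (N : ℝ) ^ 2)) ∧
      ∀ q' : ℚ, q'.den ≤ N → |atilde j - (q' : ℝ)| < 1 / (2 * (N : ℝ) ^ 2) →
        q' = q) := by
  -- basic facts
  obtain ⟨⟨i0, j0, hij0, hlamx⟩, hlb⟩ := hlam
  have hlam_pos : 0 < lamx := by
    rw [hlamx]
    exact abs_pos.mpr (sub_ne_zero.mpr fun h => hij0 (hx h).symm)
  have h1M : (1:ℝ) ≤ M := hM ▸ le_max_left _ _
  have hxM : ∀ i, |x i| ≤ M := fun i =>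
    hM ▸ le_max_of_le_right (Finset.le_sup' (fun i => |x i|) (Finset.mem_univ i))
  have hlam_le : ∀ i k : Fin (n+1), i ≠ k → lamx ≤ |x i - x k| := fun i k h =>
    hlb ⟨k, i, fun hc => h hc.symm, rfl⟩
  have hvs : Set.InjOn x ↑(Finset.univ : Finset (Fin (n+1))) := hx.injOn
  set Bnd : ℝ := (n.choose (n/2) : ℝ) * M ^ n / lamx ^ n with hBnd
  have hBnd_pos : 0 < Bnd := by
    apply div_pos _ (pow_pos hlam_pos n)
    exact mul_pos (by exact_mod_cast Nat.choose_pos (Nat.div_le_self n 2))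
      (pow_pos (lt_of_lt_of_le zero_lt_one h1M) n)
  -- coefficients of interpolation polynomial
  have key : ∀ (g c : Fin (n+1) → ℝ), (∀ i, ∑ j : Fin (n+1), c j * x i ^ (j:ℕ) = g i) →
      ∀ j : Fin (n+1), c j = ∑ i : Fin (n+1), g i * (Lagrange.basis Finset.univ x i).coeff (j:ℕ) := by
    intro g c hc j
    set p : Polynomial ℝ := ∑ j' : Fin (n+1), Polynomial.C (c j') * Polynomial.X ^ (j' : ℕ) with hp
    have hdeg : p.degree < ((Finset.univ : Finset (Fin (n+1))).card : WithBot ℕ) := by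
      rw [Finset.card_univ, Fintype.card_fin]
      refine lt_of_le_of_lt (Polynomial.degree_sum_le _ _) ?_
      rw [Finset.sup_lt_iff (by exact WithBot.bot_lt_coe _)]
      intro b _
      exact lt_of_le_of_lt (Polynomial.degree_C_mul_X_pow_le _ _)
        (by exact_mod_cast WithBot.coe_lt_coe.mpr b.isLt)
    have heval : ∀ i ∈ (Finset.univ : Finset (Fin (n+1))), p.eval (x i) = g i := by
      intro i _
      rw [hp]
      simp only [Polynomial.eval_finset_sum, Polynomial.eval_mul, Polynomial.eval_C,
        Polynomial.eval_pow, Polynomial.eval_X]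
      exact hc i
    have hip : Lagrange.interpolate Finset.univ x g = p :=
      (Lagrange.eq_interpolate_of_eval_eq _ hvs hdeg heval).symm
    have hcoeff : p.coeff (j:ℕ) = c j := by
      rw [hp, Polynomial.finset_sum_coeff]
      simp only [Polynomial.coeff_C_mul, Polynomial.coeff_X_pow]
      rw [Finset.sum_eq_single j]
      · simp
      · intro b _ hb
        rw [if_neg fun h => hb (Fin.val_injective h.symm), mul_zero]
      · intro h; exact absurd (Finset.mem_univ j) h
    calc c j = p.coeff (j:ℕ) := hcoeff.symm
      _ = (Lagrange.interpolate Finset.univ x g).coeff (j:ℕ) := by rw [hip]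
      _ = ∑ i : Fin (n+1), g i * (Lagrange.basis Finset.univ x i).coeff (j:ℕ) := by
          rw [Lagrange.interpolate_apply, Polynomial.finset_sum_coeff]
          simp only [Polynomial.coeff_C_mul]
  -- bound on basis coefficients
  have hbound : ∀ (i j : Fin (n+1)), |(Lagrange.basis Finset.univ x i).coeff (j:ℕ)| ≤ Bnd := by
    intro i j
    have hbasis : Lagrange.basis Finset.univ x i =
        Polynomial.C (∏ k ∈ Finset.univ.erase i, (x i - x k)⁻¹) *
          ∏ k ∈ Finset.univ.erase i, (Polynomial.X - Polynomial.C (x k)) := by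
      rw [Lagrange.basis]
      simp_rw [Lagrange.basisDivisor]
      rw [Finset.prod_mul_distrib, ← map_prod]
    set t := Finset.univ.erase i with ht
    have hcard : t.card = n := by
      rw [ht, Finset.card_erase_of_mem (Finset.mem_univ i), Finset.card_univ, Fintype.card_fin]; rfl
    rw [hbasis, Polynomial.coeff_C_mul, abs_mul]
    have h1 : |∏ k ∈ t, (x i - x k)⁻¹| ≤ (lamx ^ n)⁻¹ := by
      rw [Finset.abs_prod]
      calc ∏ k ∈ t, |(x i - x k)⁻¹| ≤ ∏ _k ∈ t, lamx⁻¹ := by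
            apply Finset.prod_le_prod (fun _ _ => abs_nonneg _)
            intro k hk
            rw [abs_inv]
            exact inv_anti₀ hlam_pos
              (hlam_le i k (fun h => (Finset.mem_erase.mp hk).1 h.symm))
        _ = (lamx ^ n)⁻¹ := by rw [Finset.prod_const, hcard, inv_pow]
    have h2 : |(∏ k ∈ t, (Polynomial.X - Polynomial.C (x k))).coeff (j:ℕ)| ≤ (n.choose (n/2) : ℝ) * M ^ n := by
      have hj : (j:ℕ) ≤ t.card := by rw [hcard]; exact Nat.lt_succ_iff.mp j.isLt
      refine (aux_prod_coeff t x M (fun k _ => hxM k) (j:ℕ) hj).trans ?_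
      rw [hcard]
      apply mul_le_mul
      · exact_mod_cast Nat.choose_le_middle _ _
      · exact pow_le_pow_right₀ h1M (Nat.sub_le n (j:ℕ))
      · positivity
      · positivity
    calc |∏ k ∈ t, (x i - x k)⁻¹| * |(∏ k ∈ t, (Polynomial.X - Polynomial.C (x k))).coeff (j:ℕ)|
        ≤ (lamx ^ n)⁻¹ * ((n.choose (n/2) : ℝ) * M ^ n) :=
          mul_le_mul h1 h2 (abs_nonneg _) (by positivity)
      _ = Bnd := by rw [hBnd]; ring
  have part1 : ∀ j : Fin (n + 1), |a j - atilde j| < 1 / (2 * (N : ℝ) ^ 2) := by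
    intro j
    have e1 := key f a ha j
    have e2 := key ftilde atilde hatilde j
    rw [e1, e2, ← Finset.sum_sub_distrib]
    simp_rw [← sub_mul]
    have hMn : (M:ℝ) ^ n ≠ 0 := by positivity
    have hLn : lamx ^ n ≠ 0 := by positivity
    have hCn : ((n.choose (n/2) : ℝ)) ≠ 0 := by
      exact_mod_cast (Nat.choose_pos (Nat.div_le_self n 2)).ne'
    have hNn : ((N:ℝ)) ≠ 0 := by positivity
    have hn1 : ((n:ℝ) + 1) ≠ 0 := by positivity
    calc |∑ i : Fin (n+1), (f i - ftilde i) * (Lagrange.basis Finset.univ x i).coeff (j:ℕ)|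
        ≤ ∑ i : Fin (n+1), |(f i - ftilde i) * (Lagrange.basis Finset.univ x i).coeff (j:ℕ)| :=
          Finset.abs_sum_le_sum_abs _ _
      _ < ∑ _i : Fin (n+1), ε * Bnd := by
          apply Finset.sum_lt_sum_of_nonempty Finset.univ_nonempty
          intro i _
          rw [abs_mul]
          exact lt_of_le_of_lt (mul_le_mul_of_nonneg_left (hbound i j) (abs_nonneg _))
            (mul_lt_mul_of_pos_right (hf i) hBnd_pos)
      _ = ((n:ℝ)+1) * (ε * Bnd) := by
          rw [Finset.sum_const, Finset.card_univ, Fintype.card_fin, nsmul_eq_mul]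
          push_cast; ring
      _ = 1 / (2 * (N : ℝ) ^ 2) := by
          rw [hε, hBnd]
          field_simp
  refine ⟨part1, ?_⟩
  intro j q hq hqden
  have h1 : |atilde j - (q : ℝ)| < 1 / (2 * (N : ℝ) ^ 2) := by
    rw [hq, abs_sub_comm]; exact part1 j
  refine ⟨⟨hqden, h1⟩, ?_⟩
  intro q' hq'den hq'
  by_contra hne
  have hsep := aux_rat_sep q q' (fun h => hne h.symm)
  have htri : |(q : ℝ) - (q' : ℝ)| ≤ |(q : ℝ) - atilde j| + |atilde j - (q' : ℝ)| := abs_sub_le _ _ _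
  have hq1 : |(q : ℝ) - atilde j| < 1 / (2 * (N : ℝ) ^ 2) := by
    rw [abs_sub_comm]; exact h1
  have hN0 : (0:ℝ) < N := by exact_mod_cast hN
  have hd1 : (0:ℝ) < q.den := by exact_mod_cast q.pos
  have hd2 : (0:ℝ) < q'.den := by exact_mod_cast q'.pos
  have hden : 1 / ((N:ℝ) * N) ≤ 1 / ((q.den : ℝ) * q'.den) := by
    apply one_div_le_one_div_of_le (by positivity)
    exact mul_le_mul (by exact_mod_cast hqden) (by exact_mod_cast hq'den) hd2.le hN0.le
  have hhalf : 1 / (2 * (N : ℝ) ^ 2) + 1 / (2 * (N : ℝ) ^ 2) = 1 / ((N:ℝ) * N) := by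
    have hne0 : (N:ℝ) ≠ 0 := hN0.ne'
    field_simp
    ring
  linarith
end
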